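/- arXiv:1306.0862 — 2 statements merged into one kernel-verified Lean document; each statement's English description precedes it below -/
import Mathlib

section
/- Let μ be a probability measure on 2^X satisfying the FKG condition, let C_1,…,C_n ⊆ X, and let A_i = {S ⊆ X : C_i ⊆ S}. Then for every k with 0 ≤ k ≤ n−2, E^k_{n,μ}(A_1,…,A_n) ≥ E^{k+1}_{n,μ}(A_1,…,A_n). -/
open Finset
open scoped Classical

set_option linter.unusedSectionVars false
set_option maxHeartbeats 1000000
noncomputable section

/-- Total mass the measure `μ` assigns to a family `𝒜` of subsets of `X = Fin m`. -/
def famMeas {m : ℕ} (μ : Finset (Fin m) → ℝ) (𝒜 : Finset (Finset (Fin m))) : ℝ :=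
  ∑ A ∈ 𝒜, μ A

/-- `μ` is a probability measure on `2^X`. -/
def IsProbMeasure {m : ℕ} (μ : Finset (Fin m) → ℝ) : Prop :=
  (∀ A, 0 ≤ μ A) ∧ ∑ A : Finset (Fin m), μ A = 1

/-- The FKG lattice condition on `μ`. -/
def FKGCondition {m : ℕ} (μ : Finset (Fin m) → ℝ) : Prop :=
  ∀ A B : Finset (Fin m), μ A * μ B ≤ μ (A ∩ B) * μ (A ∪ B)

/-- The principal upper set `{S ⊆ X : C ⊆ S}`. -/
def upSet {m : ℕ} (C : Finset (Fin m)) : Finset (Finset (Fin m)) :=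
  Finset.univ.filter (fun S => C ⊆ S)

/-- `P` is a set partition of `Fin n`. -/
def IsSetPartition {n : ℕ} (P : Finset (Finset (Fin n))) : Prop :=
  ∅ ∉ P ∧ ∀ i : Fin n, ∃! B, B ∈ P ∧ i ∈ B

/-- The finite set of all set partitions of `Fin n`. -/
def setPartitions (n : ℕ) : Finset (Finset (Finset (Fin n))) :=
  Finset.univ.filter IsSetPartition

/-- The first `k` indices `{1,…,k}` inside `Fin (n+1)`. -/
def firstK (n k : ℕ) : Finset (Fin (n + 1)) :=
  Finset.univ.filter (fun i => (i : ℕ) < k)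

/-- The factor contributed by a block `B` of a partition to `E^k_σ`.  Here the `n+1`
subsets are `A i = upSet (C i)` and `A_n` is `upSet (C (Fin.last n))`; the block
containing the last index is treated differently from the other blocks. -/
def blockTerm {m n : ℕ} (μ : Finset (Fin m) → ℝ) (C : Fin (n + 1) → Finset (Fin m))
    (k : ℕ) (B : Finset (Fin (n + 1))) : ℝ :=
  if Fin.last n ∈ B then
    famMeas μ (upSet (C (Fin.last n))) ^ (B ∩ firstK n k).card *
      famMeas μ (B.inf fun i => upSet (C i))
  else
    famMeas μ (upSet (C (Fin.last n))) ^ ((B ∩ firstK n k).card - 1) *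
      famMeas μ (((B ∩ firstK n k).inf fun i => upSet (C i) ∩ upSet (C (Fin.last n))) ⊓
        ((B \ firstK n k).inf fun i => upSet (C i)))

/-- The quantity `E^k_{n,μ}(A_1,…,A_n)` (with `n+1` sets, indexed by `Fin (n+1)`). -/
def Ek {m n : ℕ} (μ : Finset (Fin m) → ℝ) (C : Fin (n + 1) → Finset (Fin m)) (k : ℕ) : ℝ :=
  ∑ P ∈ setPartitions (n + 1),
    (-1 : ℝ) ^ (P.card + 1) *
      (∏ B ∈ P, ((B.card - 1).factorial : ℝ)) *
      ∏ B ∈ P, blockTerm μ C k B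

section Partitions
variable {ι : Type*} [Fintype ι] [DecidableEq ι]

def IsPartOf (S : Finset ι) (P : Finset (Finset ι)) : Prop :=
  (∀ B ∈ P, B ⊆ S ∧ B.Nonempty) ∧ ∀ i ∈ S, ∃! B, B ∈ P ∧ i ∈ B

def parts (S : Finset ι) : Finset (Finset (Finset ι)) :=
  Finset.univ.filter (IsPartOf S)

lemma mem_parts {S : Finset ι} {P : Finset (Finset ι)} : P ∈ parts S ↔ IsPartOf S P := by
  simp [parts]

lemma parts_empty : parts (∅ : Finset ι) = {∅} := by
  ext P
  simp only [mem_parts, IsPartOf, mem_singleton]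
  constructor
  · rintro ⟨h1, _⟩
    rw [Finset.eq_empty_iff_forall_notMem]
    intro B hB
    obtain ⟨hBs, hne⟩ := h1 B hB
    exact hne.ne_empty (Finset.subset_empty.mp hBs)
  · rintro rfl
    exact ⟨by simp, by simp⟩

def blockOf (P : Finset (Finset ι)) (j : ι) : Finset ι :=
  if h : ∃! B, B ∈ P ∧ j ∈ B then h.exists.choose else ∅

lemma blockOf_mem {P : Finset (Finset ι)} {j : ι} (h : ∃! B, B ∈ P ∧ j ∈ B) :
    blockOf P j ∈ P ∧ j ∈ blockOf P j := by
  rw [blockOf, dif_pos h]; exact h.exists.choose_spec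

lemma eq_blockOf {P : Finset (Finset ι)} {j : ι} (h : ∃! B, B ∈ P ∧ j ∈ B) {B : Finset ι}
    (hB : B ∈ P) (hj : j ∈ B) : B = blockOf P j :=
  h.unique ⟨hB, hj⟩ (blockOf_mem h)

lemma IsPartOf.exu {S : Finset ι} {P : Finset (Finset ι)} (h : IsPartOf S P) {j : ι}
    (hj : j ∈ S) : ∃! B, B ∈ P ∧ j ∈ B := h.2 j hj

/-- forward well-formedness for the split bijection -/
lemma part_erase {S : Finset ι} {P : Finset (Finset ι)} (hP : IsPartOf S P) {j : ι} (hj : j ∈ S) :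
    (blockOf P j).erase j ⊆ S.erase j ∧
      IsPartOf (S \ blockOf P j) (P.erase (blockOf P j)) := by
  have hex := hP.exu hj
  obtain ⟨hBP, hjB⟩ := blockOf_mem hex
  constructor
  · exact Finset.erase_subset_erase _ (hP.1 _ hBP).1
  constructor
  · intro B hB
    rw [Finset.mem_erase] at hB
    obtain ⟨hne, hBP'⟩ := hB
    refine ⟨fun i hi => Finset.mem_sdiff.mpr ⟨(hP.1 _ hBP').1 hi, fun hiB => ?_⟩, (hP.1 _ hBP').2⟩
    exact hne (hP.2 i ((hP.1 _ hBP').1 hi) |>.unique ⟨hBP', hi⟩ ⟨hBP, hiB⟩)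
  · intro i hi
    rw [Finset.mem_sdiff] at hi
    obtain ⟨B', ⟨hB'P, hiB'⟩, huniq⟩ := hP.2 i hi.1
    refine ⟨B', ⟨Finset.mem_erase.mpr ⟨fun hEq => hi.2 (hEq ▸ hiB'), hB'P⟩, hiB'⟩, ?_⟩
    rintro B'' ⟨hB''P, hiB''⟩
    exact huniq B'' ⟨(Finset.mem_erase.mp hB''P).2, hiB''⟩

/-- backward well-formedness for the split bijection -/
lemma part_insert {S : Finset ι} {j : ι} (hj : j ∈ S) {B : Finset ι} (hB : B ⊆ S.erase j)
    {Q : Finset (Finset ι)} (hQ : IsPartOf (S \ insert j B) Q) :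
    IsPartOf S (insert (insert j B) Q) ∧ insert j B ∉ Q := by
  have hnotin : insert j B ∉ Q := by
    intro hmem
    have := (hQ.1 _ hmem).1 (Finset.mem_insert_self j B)
    rw [Finset.mem_sdiff] at this
    exact this.2 (Finset.mem_insert_self j B)
  have hjBsub : insert j B ⊆ S := by
    intro x hx
    rcases Finset.mem_insert.mp hx with rfl | hx
    · exact hj
    · exact Finset.mem_of_mem_erase (hB hx)
  refine ⟨⟨?_, ?_⟩, hnotin⟩
  · intro B' hB'
    rcases Finset.mem_insert.mp hB' with rfl | hB'
    · exact ⟨hjBsub, ⟨j, Finset.mem_insert_self j B⟩⟩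
    · exact ⟨(hQ.1 _ hB').1.trans (Finset.sdiff_subset), (hQ.1 _ hB').2⟩
  · intro i hi
    by_cases hijB : i ∈ insert j B
    · refine ⟨insert j B, ⟨Finset.mem_insert_self _ _, hijB⟩, ?_⟩
      rintro B' ⟨hB'mem, hiB'⟩
      rcases Finset.mem_insert.mp hB'mem with rfl | hB'Q
      · rfl
      · exact absurd ((hQ.1 _ hB'Q).1 hiB') (by simp [hijB])
    · have hi' : i ∈ S \ insert j B := Finset.mem_sdiff.mpr ⟨hi, hijB⟩
      obtain ⟨B', ⟨hB'Q, hiB'⟩, huniq⟩ := hQ.2 i hi'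
      refine ⟨B', ⟨Finset.mem_insert_of_mem hB'Q, hiB'⟩, ?_⟩
      rintro B'' ⟨hB''mem, hiB''⟩
      rcases Finset.mem_insert.mp hB''mem with rfl | hB''Q
      · exact absurd hiB'' hijB
      · exact huniq B'' ⟨hB''Q, hiB''⟩

/-- The split-off-a-block lemma. -/
lemma sum_parts_split (S : Finset ι) {j : ι} (hj : j ∈ S) (G : Finset (Finset ι) → ℝ) :
    ∑ P ∈ parts S, G P
      = ∑ B ∈ (S.erase j).powerset, ∑ Q ∈ parts (S \ insert j B), G (insert (insert j B) Q) := by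
  rw [Finset.sum_sigma' ((S.erase j).powerset) (fun B => parts (S \ insert j B))
    (fun B Q => G (insert (insert j B) Q))]
  refine Finset.sum_nbij' (i := fun P => ⟨(blockOf P j).erase j, P.erase (blockOf P j)⟩)
    (j := fun x => insert (insert j x.1) x.2) ?_ ?_ ?_ ?_ ?_
  · intro P hP
    rw [mem_parts] at hP
    have h := part_erase hP hj
    have hins : insert j ((blockOf P j).erase j) = blockOf P j :=
      Finset.insert_erase (blockOf_mem (hP.exu hj)).2
    rw [Finset.mem_sigma, Finset.mem_powerset, mem_parts]
    exact ⟨h.1, by rw [hins]; exact h.2⟩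
  · intro x hx
    rw [Finset.mem_sigma, Finset.mem_powerset, mem_parts] at hx
    rw [mem_parts]
    exact (part_insert hj hx.1 hx.2).1
  · intro P hP
    rw [mem_parts] at hP
    have hins : insert j ((blockOf P j).erase j) = blockOf P j :=
      Finset.insert_erase (blockOf_mem (hP.exu hj)).2
    simp only [hins]
    exact Finset.insert_erase (blockOf_mem (hP.exu hj)).1
  · intro x hx
    rw [Finset.mem_sigma, Finset.mem_powerset, mem_parts] at hx
    obtain ⟨hPart, hnotin⟩ := part_insert hj hx.1 hx.2
    have hexu := hPart.exu hj
    have hblock : insert j x.1 = blockOf (insert (insert j x.1) x.2) j :=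
      eq_blockOf hexu (Finset.mem_insert_self _ _) (Finset.mem_insert_self j _)
    have hjx1 : j ∉ x.1 := fun h => (Finset.mem_erase.mp (hx.1 h)).1 rfl
    have h1 : (blockOf (insert (insert j x.1) x.2) j).erase j = x.1 := by
      rw [← hblock, Finset.erase_insert hjx1]
    have h2 : (insert (insert j x.1) x.2).erase (blockOf (insert (insert j x.1) x.2) j) = x.2 := by
      rw [← hblock, Finset.erase_insert hnotin]
    exact Sigma.ext h1 (heq_of_eq h2)
  · intro P hP
    rw [mem_parts] at hP
    have hins : insert j ((blockOf P j).erase j) = blockOf P j :=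
      Finset.insert_erase (blockOf_mem (hP.exu hj)).2
    simp only [hins]
    rw [Finset.insert_erase (blockOf_mem (hP.exu hj)).1]

end Partitions
section PFsec
variable {ι : Type*} [Fintype ι] [DecidableEq ι]

def PF (g : Finset ι → ℝ) (S : Finset ι) : ℝ :=
  ∑ P ∈ parts S, (-1 : ℝ) ^ (P.card + 1) * ∏ B ∈ P, g B

lemma PF_empty (g : Finset ι → ℝ) : PF g (∅ : Finset ι) = -1 := by
  simp [PF, parts_empty]

lemma PF_congr {g g' : Finset ι → ℝ} {S : Finset ι}
    (h : ∀ B : Finset ι, B ⊆ S → B.Nonempty → g B = g' B) : PF g S = PF g' S := by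
  refine Finset.sum_congr rfl fun P hP => ?_
  rw [mem_parts] at hP
  congr 1
  exact Finset.prod_congr rfl fun B hB => h B (hP.1 B hB).1 (hP.1 B hB).2

lemma notmem_parts_sdiff {S : Finset ι} {j : ι} {B : Finset ι} {Q : Finset (Finset ι)}
    (hQ : Q ∈ parts (S \ insert j B)) : insert j B ∉ Q := by
  intro hmem
  rw [mem_parts] at hQ
  have := (hQ.1 _ hmem).1 (Finset.mem_insert_self j B)
  rw [Finset.mem_sdiff] at this
  exact this.2 (Finset.mem_insert_self j B)

lemma PF_rec (g : Finset ι → ℝ) {S : Finset ι} {j : ι} (hj : j ∈ S) :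
    PF g S = ∑ B ∈ (S.erase j).powerset, -(g (insert j B) * PF g (S \ insert j B)) := by
  rw [PF, sum_parts_split S hj]
  refine Finset.sum_congr rfl fun B hB => ?_
  rw [PF, Finset.mul_sum, ← Finset.sum_neg_distrib]
  refine Finset.sum_congr rfl fun Q hQ => ?_
  have hnot := notmem_parts_sdiff hQ
  rw [Finset.card_insert_of_notMem hnot, Finset.prod_insert hnot]
  ring

lemma sum_powerset_insert_eq (T : Finset ι) (H : Finset ι → ℝ) :
    ∑ j ∈ T, ∑ B ∈ (T.erase j).powerset, H (insert j B)
      = ∑ B ∈ T.powerset, (B.card : ℝ) * H B := by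
  have step : ∀ j ∈ T, ∑ B ∈ (T.erase j).powerset, H (insert j B)
      = ∑ B ∈ T.powerset.filter (fun B => j ∈ B), H B := by
    intro j hjT
    refine Finset.sum_nbij' (i := fun B => insert j B) (j := fun B => B.erase j) ?_ ?_ ?_ ?_ ?_
    · intro B hB
      rw [Finset.mem_powerset] at hB
      rw [Finset.mem_filter, Finset.mem_powerset]
      refine ⟨Finset.insert_subset hjT (hB.trans (Finset.erase_subset _ _)), Finset.mem_insert_self _ _⟩
    · intro B hB
      rw [Finset.mem_filter, Finset.mem_powerset] at hB
      rw [Finset.mem_powerset]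
      exact Finset.erase_subset_erase _ hB.1
    · intro B hB
      rw [Finset.mem_powerset] at hB
      have : j ∉ B := fun h => (Finset.mem_erase.mp (hB h)).1 rfl
      exact Finset.erase_insert this
    · intro B hB
      rw [Finset.mem_filter] at hB
      exact Finset.insert_erase hB.2
    · intro B _; rfl
  rw [Finset.sum_congr rfl step]
  simp_rw [Finset.sum_filter]
  rw [Finset.sum_comm]
  refine Finset.sum_congr rfl fun B hB => ?_
  rw [Finset.mem_powerset] at hB
  rw [Finset.sum_ite_mem, Finset.inter_eq_right.mpr hB, Finset.sum_const, nsmul_eq_mul]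
end PFsec
section Analytic
variable {m : ℕ}

structure Good (φ : Finset (Fin m) → ℝ) : Prop where
  empty : φ ∅ = 1
  nonneg : ∀ D, 0 ≤ φ D
  anti : ∀ ⦃D D' : Finset (Fin m)⦄, D ⊆ D' → φ D' ≤ φ D
  fkg : ∀ T D D' : Finset (Fin m), φ (D ∪ T) * φ (D' ∪ T) ≤ φ T * φ (D ∪ D' ∪ T)

lemma Good.le_one {φ : Finset (Fin m) → ℝ} (h : Good φ) (D : Finset (Fin m)) : φ D ≤ 1 := by
  rw [← h.empty]; exact h.anti (Finset.empty_subset D)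

def condPhi (φ : Finset (Fin m) → ℝ) (R : Finset (Fin m)) : Finset (Fin m) → ℝ :=
  fun E => φ (E ∪ R) / φ R

lemma condPhi_mul {φ : Finset (Fin m) → ℝ} {R : Finset (Fin m)} (hR : φ R ≠ 0)
    (E : Finset (Fin m)) : φ R * condPhi φ R E = φ (E ∪ R) := by
  rw [condPhi, mul_comm, div_mul_cancel₀ _ hR]

lemma condPhi_absorb (φ : Finset (Fin m) → ℝ) (R E : Finset (Fin m)) :
    condPhi φ R (E ∪ R) = condPhi φ R E := by
  rw [condPhi, condPhi, Finset.union_assoc, Finset.union_self]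

lemma Good.cond {φ : Finset (Fin m) → ℝ} (h : Good φ) {R : Finset (Fin m)} (hR : 0 < φ R) :
    Good (condPhi φ R) where
  empty := by rw [condPhi, Finset.empty_union, div_self hR.ne']
  nonneg := fun D => div_nonneg (h.nonneg _) hR.le
  anti := fun D D' hsub => by
    rw [condPhi, condPhi]
    exact (div_le_div_iff_of_pos_right hR).mpr (h.anti (Finset.union_subset_union_left hsub))
  fkg := fun T D D' => by
    simp only [condPhi]
    have key : φ ((D ∪ T) ∪ R) * φ ((D' ∪ T) ∪ R) ≤ φ (T ∪ R) * φ ((D ∪ D' ∪ T) ∪ R) := by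
      rw [Finset.union_assoc D T R, Finset.union_assoc D' T R,
        Finset.union_assoc (D ∪ D') T R]
      exact h.fkg (T ∪ R) D D'
    rw [div_mul_div_comm, div_mul_div_comm]
    exact (div_le_div_iff_of_pos_right (mul_pos hR hR)).mpr key

lemma Good.le_cond {φ : Finset (Fin m) → ℝ} (h : Good φ) {R : Finset (Fin m)} (hR : 0 < φ R)
    (E : Finset (Fin m)) : φ E ≤ condPhi φ R E := by
  rw [condPhi, le_div_iff₀ hR]
  have := h.fkg ∅ E R
  simpa [h.empty, Finset.union_empty] using this

end Analytic
section Main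
variable {m : ℕ} {ι : Type*} [Fintype ι] [DecidableEq ι]

def gW (C : ι → Finset (Fin m)) (φ ψ : Finset (Fin m) → ℝ) (D : Finset ι) (B : Finset ι) : ℝ :=
  ((B.card - 1).factorial : ℝ) * (if (B ∩ D).Nonempty then ψ (B.sup C) else φ (B.sup C))

def Wf (C : ι → Finset (Fin m)) (φ ψ : Finset (Fin m) → ℝ) (D S : Finset ι) : ℝ :=
  PF (gW C φ ψ D) S

def Ff (C : ι → Finset (Fin m)) (φ : Finset (Fin m) → ℝ) (S : Finset ι) : ℝ :=
  PF (gW C φ φ ∅) S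

lemma gW_insert_notmem (C : ι → Finset (Fin m)) (φ ψ : Finset (Fin m) → ℝ) {j : ι}
    (D : Finset ι) {B : Finset ι} (hj : j ∉ B) :
    gW C φ ψ (insert j D) B = gW C φ ψ D B := by
  have hBD : B ∩ insert j D = B ∩ D := by
    ext i
    simp only [Finset.mem_inter, Finset.mem_insert]
    constructor
    · rintro ⟨hiB, rfl | hiD⟩
      · exact absurd hiB hj
      · exact ⟨hiB, hiD⟩
    · rintro ⟨hiB, hiD⟩; exact ⟨hiB, Or.inr hiD⟩
  rw [gW, gW, hBD]

lemma sdiff_insert_eq (S : Finset ι) (j : ι) (B : Finset ι) :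
    S \ insert j B = (S.erase j) \ B := by
  ext i
  simp only [Finset.mem_sdiff, Finset.mem_insert, Finset.mem_erase]
  tauto

lemma factorial_cast_eq {B : Finset ι} (hB : B.Nonempty) :
    ((B.card).factorial : ℝ) = (B.card : ℝ) * (((B.card - 1)).factorial : ℝ) := by
  obtain ⟨c, hc⟩ := Nat.exists_eq_succ_of_ne_zero (Finset.card_pos.mpr hB).ne'
  rw [hc, Nat.succ_sub_one, Nat.factorial_succ]
  push_cast
  ring

/-- The collapse identity: if `ψ` absorbs `C lst`, the index `lst` can be eliminated. -/
lemma collapse (C : ι → Finset (Fin m)) {ψ : Finset (Fin m) → ℝ} (hψ1 : ψ ∅ = 1) {lst : ι}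
    {S : Finset ι} (hlst : lst ∈ S) (habs : ∀ E, ψ (E ∪ C lst) = ψ E) :
    Ff C ψ S = (((S.erase lst).card : ℝ) - 1) * Ff C ψ (S.erase lst) := by
  classical
  set g : Finset ι → ℝ := gW C ψ ψ ∅ with hg
  have hgj : ∀ (j : ι) (B : Finset ι), j ∉ B →
      g (insert j B) = ((B.card).factorial : ℝ) * ψ ((insert j B).sup C) := by
    intro j B hj
    rw [hg, gW, Finset.card_insert_of_notMem hj, Nat.add_sub_cancel,
      if_neg (by simp)]
  set H : Finset ι → ℝ :=
    fun B => -(((B.card - 1).factorial : ℝ) * ψ (B.sup C) * PF g ((S.erase lst) \ B)) with hH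
  have stepA : Ff C ψ S
      = ∑ B ∈ (S.erase lst).powerset, ((B.card : ℝ) * H B + if B = ∅ then H ∅ else 0) := by
    rw [Ff, ← hg, PF_rec g hlst]
    refine Finset.sum_congr rfl fun B hB => ?_
    rw [Finset.mem_powerset] at hB
    have hjB : lst ∉ B := fun h => (Finset.mem_erase.mp (hB h)).1 rfl
    have hsup : ψ ((insert lst B).sup C) = ψ (B.sup C) := by
      rw [Finset.sup_insert]
      show ψ (C lst ∪ B.sup C) = _
      rw [Finset.union_comm, habs]
    rw [hgj lst B hjB, sdiff_insert_eq S lst B, hsup]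
    rcases B.eq_empty_or_nonempty with rfl | hBne
    · simp [hH, hψ1]
    · rw [if_neg hBne.ne_empty, factorial_cast_eq hBne, hH]
      ring
  have stepB : ((S.erase lst).card : ℝ) * PF g (S.erase lst)
      = ∑ B ∈ (S.erase lst).powerset, (B.card : ℝ) * H B := by
    have hrec : ∀ j ∈ S.erase lst, PF g (S.erase lst)
        = ∑ B ∈ ((S.erase lst).erase j).powerset, H (insert j B) := by
      intro j hj
      rw [PF_rec g hj]
      refine Finset.sum_congr rfl fun B hB => ?_
      rw [Finset.mem_powerset] at hB
      have hjB : j ∉ B := fun h => (Finset.mem_erase.mp (hB h)).1 rfl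
      have hcard : (insert j B).card - 1 = B.card := by
        rw [Finset.card_insert_of_notMem hjB, Nat.add_sub_cancel]
      have hHv : H (insert j B) = -((((insert j B).card - 1).factorial : ℝ)
          * ψ ((insert j B).sup C) * PF g ((S.erase lst) \ insert j B)) := rfl
      rw [hgj j B hjB, hHv, hcard]
    calc ((S.erase lst).card : ℝ) * PF g (S.erase lst)
        = ∑ _j ∈ S.erase lst, PF g (S.erase lst) := by
          rw [Finset.sum_const, nsmul_eq_mul]
      _ = ∑ j ∈ S.erase lst, ∑ B ∈ ((S.erase lst).erase j).powerset, H (insert j B) :=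
          Finset.sum_congr rfl hrec
      _ = ∑ B ∈ (S.erase lst).powerset, (B.card : ℝ) * H B :=
          sum_powerset_insert_eq (S.erase lst) H
  have hH0 : H ∅ = -PF g (S.erase lst) := by
    simp [hH, hψ1]
  rw [stepA, Finset.sum_add_distrib, ← stepB,
    Finset.sum_ite_eq' ((S.erase lst).powerset) (∅ : Finset ι) (fun _ => H ∅),
    if_pos (Finset.empty_mem_powerset _), hH0]
  show _ = (((S.erase lst).card : ℝ) - 1) * PF g (S.erase lst)
  ring

/-- Monotone step for `Wf` in the treated set `D`. -/
lemma Wf_mono_step (C : ι → Finset (Fin m)) {φ ψ : Finset (Fin m) → ℝ}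
    (hφψ : ∀ E, φ E ≤ ψ E) {D S : Finset ι} {j : ι}
    (hDS : D ⊆ S) (hj : j ∈ S) (hjD : j ∉ D)
    (hWnn : ∀ T : Finset ι, D ⊆ T → T ⊆ S.erase j → 0 ≤ Wf C φ ψ D T) :
    Wf C φ ψ (insert j D) S ≤ Wf C φ ψ D S := by
  rw [Wf, Wf, PF_rec _ hj, PF_rec _ hj, ← sub_nonneg, ← Finset.sum_sub_distrib]
  refine Finset.sum_nonneg fun B hB => ?_
  rw [Finset.mem_powerset] at hB
  have hcongr : PF (gW C φ ψ (insert j D)) (S \ insert j B) = PF (gW C φ ψ D) (S \ insert j B) := by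
    refine PF_congr fun B' hB' _ => ?_
    have hjB' : j ∉ B' := fun h => by
      have := hB' h
      rw [Finset.mem_sdiff] at this
      exact this.2 (Finset.mem_insert_self j B)
    exact gW_insert_notmem C φ ψ D hjB'
  rw [hcongr]
  have hkey : -(gW C φ ψ D (insert j B) * PF (gW C φ ψ D) (S \ insert j B))
      - -(gW C φ ψ (insert j D) (insert j B) * PF (gW C φ ψ D) (S \ insert j B))
      = (gW C φ ψ (insert j D) (insert j B) - gW C φ ψ D (insert j B))
          * PF (gW C φ ψ D) (S \ insert j B) := by ring
  rw [hkey]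
  by_cases hint : ((insert j B) ∩ D).Nonempty
  · have heq : gW C φ ψ (insert j D) (insert j B) = gW C φ ψ D (insert j B) := by
      rw [gW, gW, if_pos hint, if_pos
        ⟨j, Finset.mem_inter.mpr ⟨Finset.mem_insert_self j B, Finset.mem_insert_self j D⟩⟩]
    rw [heq, sub_self, zero_mul]
  · have hDT : D ⊆ S \ insert j B := by
      intro i hi
      rw [Finset.mem_sdiff]
      refine ⟨hDS hi, fun hmem => hint ⟨i, Finset.mem_inter.mpr ⟨hmem, hi⟩⟩⟩
    have hTsub : S \ insert j B ⊆ S.erase j := by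
      intro i hi
      rw [Finset.mem_sdiff] at hi
      rw [Finset.mem_erase]
      exact ⟨fun h => hi.2 (h ▸ Finset.mem_insert_self j B), hi.1⟩
    have hPF : 0 ≤ PF (gW C φ ψ D) (S \ insert j B) := hWnn _ hDT hTsub
    have hgle : gW C φ ψ D (insert j B) ≤ gW C φ ψ (insert j D) (insert j B) := by
      rw [gW, gW, if_neg hint, if_pos
        ⟨j, Finset.mem_inter.mpr ⟨Finset.mem_insert_self j B, Finset.mem_insert_self j D⟩⟩]
      exact mul_le_mul_of_nonneg_left (hφψ _) (Nat.cast_nonneg _)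
    exact mul_nonneg (sub_nonneg.mpr hgle) hPF

def Pprop (C : ι → Finset (Fin m)) (k : ℕ) : Prop :=
  ∀ φ : Finset (Fin m) → ℝ, Good φ → ∀ S : Finset ι, S.Nonempty → S.card ≤ k → 0 ≤ Ff C φ S

def Qprop (C : ι → Finset (Fin m)) (k : ℕ) : Prop :=
  ∀ φ : Finset (Fin m) → ℝ, Good φ → ∀ lst : ι, 0 < φ (C lst) →
    ∀ D S : Finset ι, lst ∈ D → D ⊆ S → S.card ≤ k →
      0 ≤ Wf C φ (condPhi φ (C lst)) D S

lemma Q_of_small (C : ι → Finset (Fin m)) (k : ℕ)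
    (IHP : ∀ k' < k, Pprop C k') (IHQ : ∀ k' < k, Qprop C k') : Qprop C k := by
  intro φ hφ lst hp D S hlstD hDS hcard
  set ψ := condPhi φ (C lst) with hψ
  have hψgood : Good ψ := hφ.cond hp
  have main : ∀ c : ℕ, ∀ D : Finset ι, lst ∈ D → D ⊆ S → S.card - D.card = c →
      0 ≤ Wf C φ ψ D S := by
    intro c
    induction c with
    | zero =>
      intro D hlstD hDS hc
      have hSD : D = S :=
        Finset.eq_of_subset_of_card_le hDS (Nat.sub_eq_zero_iff_le.mp hc)
      subst hSD
      have hWF : Wf C φ ψ D D = Ff C ψ D := by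
        refine PF_congr fun B hBS hBne => ?_
        rw [gW, gW, if_pos (by rwa [Finset.inter_eq_left.mpr hBS]),
          if_neg (by simp)]
      rw [hWF, collapse C hψgood.empty hlstD (fun E => condPhi_absorb φ (C lst) E)]
      rcases (D.erase lst).eq_empty_or_nonempty with he | hne
      · rw [he]
        simp [Ff, PF_empty]
      · have hcarde : (D.erase lst).card < k := by
          have h1 : (D.erase lst).card = D.card - 1 := Finset.card_erase_of_mem hlstD
          have h2 : 1 ≤ D.card := Finset.card_pos.mpr ⟨lst, hlstD⟩
          omega
        have h0 : 0 ≤ Ff C ψ (D.erase lst) :=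
          IHP _ hcarde ψ hψgood _ hne le_rfl
        have hco : (0:ℝ) ≤ ((D.erase lst).card : ℝ) - 1 := by
          have : 1 ≤ (D.erase lst).card := Finset.card_pos.mpr hne
          have h1 : (1:ℝ) ≤ ((D.erase lst).card : ℝ) := by exact_mod_cast this
          linarith
        exact mul_nonneg hco h0
    | succ c ih =>
      intro D hlstD hDS hc
      have hne : D ≠ S := by
        intro h
        subst h
        simp at hc
      obtain ⟨j, hjS, hjD⟩ : ∃ j ∈ S, j ∉ D := by
        by_contra h
        push_neg at h
        exact hne (Finset.Subset.antisymm hDS h)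
      have h1 : Wf C φ ψ (insert j D) S ≤ Wf C φ ψ D S := by
        refine Wf_mono_step C (hφ.le_cond hp) hDS hjS hjD fun T hDT hTsub => ?_
        have hTk : T.card < k := by
          have h3 : T.card ≤ (S.erase j).card := Finset.card_le_card hTsub
          have h4 : (S.erase j).card = S.card - 1 := Finset.card_erase_of_mem hjS
          have h5 : 1 ≤ S.card := Finset.card_pos.mpr ⟨j, hjS⟩
          omega
        exact IHQ _ hTk φ hφ lst hp D T hlstD hDT le_rfl
      have h2 : 0 ≤ Wf C φ ψ (insert j D) S := by
        refine ih (insert j D) (Finset.mem_insert_of_mem hlstD)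
          (Finset.insert_subset hjS hDS) ?_
        rw [Finset.card_insert_of_notMem hjD]
        omega
      linarith
  exact main _ D hlstD hDS rfl

lemma P_of_Q (C : ι → Finset (Fin m)) (k : ℕ) (hQ : Qprop C k) : Pprop C k := by
  intro φ hφ S hS hcard
  obtain ⟨lst, hlst⟩ := hS
  by_cases hp : 0 < φ (C lst)
  · set ψ := condPhi φ (C lst) with hψ
    have key : Ff C φ S = φ (C lst) * Wf C φ ψ {lst} S := by
      rw [Ff, Wf, PF, PF, Finset.mul_sum]
      refine Finset.sum_congr rfl fun P hP => ?_
      rw [mem_parts] at hP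
      have hexu := hP.exu hlst
      obtain ⟨hBmem, hlstB⟩ := blockOf_mem hexu
      have hCsub : C lst ⊆ (blockOf P lst).sup C := Finset.le_sup hlstB
      have hsup : (blockOf P lst).sup C ∪ C lst = (blockOf P lst).sup C :=
        Finset.union_eq_left.mpr hCsub
      have hval : gW C φ φ ∅ (blockOf P lst) = φ (C lst) * gW C φ ψ {lst} (blockOf P lst) := by
        rw [gW, gW, if_neg (by simp), if_pos
          ⟨lst, Finset.mem_inter.mpr ⟨hlstB, Finset.mem_singleton_self lst⟩⟩]
        have hv2 : φ (C lst) * ψ ((blockOf P lst).sup C) = φ ((blockOf P lst).sup C) := by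
          rw [hψ, condPhi_mul hp.ne', hsup]
        rw [← hv2]
        ring
      have hprods : ∏ B ∈ P.erase (blockOf P lst), gW C φ φ ∅ B
          = ∏ B ∈ P.erase (blockOf P lst), gW C φ ψ {lst} B := by
        refine Finset.prod_congr rfl fun B hB => ?_
        obtain ⟨hneq, hBP⟩ := Finset.mem_erase.mp hB
        have hlstnB : lst ∉ B := fun h => hneq (eq_blockOf hexu hBP h)
        rw [gW, gW, if_neg (by simp), if_neg (by
          rw [Finset.inter_comm, Finset.singleton_inter_of_notMem hlstnB]
          exact Finset.not_nonempty_empty)]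
      rw [← Finset.mul_prod_erase P (gW C φ φ ∅) hBmem,
        ← Finset.mul_prod_erase P (gW C φ ψ {lst}) hBmem, hval, hprods]
      ring
    rw [key]
    exact mul_nonneg hp.le
      (hQ φ hφ lst hp {lst} S (Finset.mem_singleton_self lst)
        (Finset.singleton_subset_iff.mpr hlst) hcard)
  · have hp0 : φ (C lst) = 0 := le_antisymm (not_lt.mp hp) (hφ.nonneg _)
    have hzero : Ff C φ S = 0 := by
      refine Finset.sum_eq_zero fun P hP => ?_
      rw [mem_parts] at hP
      have hexu := hP.exu hlst
      obtain ⟨hBmem, hlstB⟩ := blockOf_mem hexu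
      have hCsub : C lst ⊆ (blockOf P lst).sup C := Finset.le_sup hlstB
      have hφ0 : φ ((blockOf P lst).sup C) = 0 :=
        le_antisymm (hp0 ▸ hφ.anti hCsub) (hφ.nonneg _)
      have hg0 : gW C φ φ ∅ (blockOf P lst) = 0 := by
        rw [gW, if_neg (by simp), hφ0, mul_zero]
      rw [Finset.prod_eq_zero hBmem hg0, mul_zero]
    rw [hzero]

lemma PQ_all (C : ι → Finset (Fin m)) : ∀ k, Pprop C k ∧ Qprop C k := by
  intro k
  induction k using Nat.strong_induction_on with
  | _ k IH =>
    have hQ : Qprop C k := Q_of_small C k (fun k' h => (IH k' h).1) (fun k' h => (IH k' h).2)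
    exact ⟨P_of_Q C k hQ, hQ⟩

end Main
section Bridge
variable {m : ℕ}

def upPhi (μ : Finset (Fin m) → ℝ) : Finset (Fin m) → ℝ := fun D => famMeas μ (upSet D)

lemma upSet_subset {D D' : Finset (Fin m)} (h : D ⊆ D') : upSet D' ⊆ upSet D := by
  intro S hS
  rw [upSet, Finset.mem_filter] at *
  exact ⟨hS.1, h.trans hS.2⟩

lemma upPhi_good {μ : Finset (Fin m) → ℝ} (hμ : IsProbMeasure μ) (hFKG : FKGCondition μ) :
    Good (upPhi μ) where
  empty := by
    rw [upPhi, famMeas, upSet]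
    rw [Finset.filter_true_of_mem (fun S _ => Finset.empty_subset S)]
    exact hμ.2
  nonneg := fun D => by
    rw [upPhi, famMeas]
    exact Finset.sum_nonneg fun A _ => hμ.1 A
  anti := fun D D' h => by
    rw [upPhi]
    exact Finset.sum_le_sum_of_subset_of_nonneg (upSet_subset h) (fun A _ _ => hμ.1 A)
  fkg := by
    intro T D D'
    have key := four_functions_theorem_univ
      (fun A : Finset (Fin m) => if D ∪ T ⊆ A then μ A else 0)
      (fun A => if D' ∪ T ⊆ A then μ A else 0)
      (fun A => if T ⊆ A then μ A else 0)
      (fun A => if D ∪ D' ∪ T ⊆ A then μ A else 0)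
      (fun A => by dsimp; split <;> simp [hμ.1 A])
      (fun A => by dsimp; split <;> simp [hμ.1 A])
      (fun A => by dsimp; split <;> simp [hμ.1 A])
      (fun A => by dsimp; split <;> simp [hμ.1 A])
      (fun a b => by
        dsimp
        by_cases h1 : D ∪ T ⊆ a
        · by_cases h2 : D' ∪ T ⊆ b
          · rw [if_pos h1, if_pos h2, if_pos, if_pos]
            · exact hFKG a b
            · show D ∪ D' ∪ T ⊆ a ⊔ b
              rw [Finset.sup_eq_union]
              intro x hx
              rcases Finset.mem_union.mp hx with hx' | hxT
              · rcases Finset.mem_union.mp hx' with hxD | hxD'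
                · exact Finset.mem_union_left _ (h1 (Finset.mem_union_left _ hxD))
                · exact Finset.mem_union_right _ (h2 (Finset.mem_union_left _ hxD'))
              · exact Finset.mem_union_left _ (h1 (Finset.mem_union_right _ hxT))
            · show T ⊆ a ⊓ b
              rw [Finset.inf_eq_inter]
              intro x hx
              exact Finset.mem_inter.mpr
                ⟨h1 (Finset.mem_union_right _ hx), h2 (Finset.mem_union_right _ hx)⟩
          · rw [if_neg h2, mul_zero]
            apply mul_nonneg <;> (split <;> simp [hμ.1])
        · rw [if_neg h1, zero_mul]
          apply mul_nonneg <;> (split <;> simp [hμ.1]))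
    have hconv : ∀ E : Finset (Fin m),
        (∑ A : Finset (Fin m), if E ⊆ A then μ A else 0) = upPhi μ E := by
      intro E
      rw [upPhi, famMeas, upSet, Finset.sum_filter]
    rw [← hconv, ← hconv, ← hconv, ← hconv]
    exact key

end Bridge
section Assemble
variable {m n : ℕ}

lemma upSet_inter (D D' : Finset (Fin m)) : upSet D ∩ upSet D' = upSet (D ∪ D') := by
  ext S
  simp only [upSet, Finset.mem_inter, Finset.mem_filter, Finset.mem_univ, true_and,
    Finset.union_subset_iff]

lemma upSet_empty : upSet (∅ : Finset (Fin m)) = (⊤ : Finset (Finset (Fin m))) := by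
  rw [Finset.top_eq_univ, upSet, Finset.filter_true_of_mem (fun S _ => Finset.empty_subset S)]

lemma inf_upSet {ι : Type*} [DecidableEq ι] (K : ι → Finset (Fin m)) (B : Finset ι) :
    B.inf (fun i => upSet (K i)) = upSet (B.sup K) := by
  induction B using Finset.induction_on with
  | empty => simp [upSet_empty]
  | insert _ _ ha ih =>
    rw [Finset.inf_insert, Finset.sup_insert, ih, Finset.inf_eq_inter, upSet_inter,
      Finset.sup_eq_union]

lemma sup_union_const {ι : Type*} [DecidableEq ι] (K : ι → Finset (Fin m)) (R : Finset (Fin m))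
    {B : Finset ι} (hB : B.Nonempty) : B.sup (fun i => K i ∪ R) = B.sup K ∪ R := by
  induction hB using Finset.Nonempty.cons_induction with
  | singleton i => simp
  | cons a s ha hs ih =>
    rw [Finset.sup_cons, Finset.sup_cons, ih, Finset.sup_eq_union]
    ext x
    simp only [Finset.mem_union, Finset.sup_eq_union]
    tauto

lemma count_blocks {ι : Type*} [Fintype ι] [DecidableEq ι] {P : Finset (Finset ι)}
    (hP : IsPartOf (Finset.univ : Finset ι) P) (i : ι) :
    ∑ B ∈ P, (if i ∈ B then 1 else 0) = 1 := by
  have hexu := hP.2 i (Finset.mem_univ i)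
  rw [← Finset.card_filter]
  rw [Finset.card_eq_one]
  refine ⟨blockOf P i, ?_⟩
  ext B'
  simp only [Finset.mem_filter, Finset.mem_singleton]
  constructor
  · rintro ⟨hB', hiB'⟩
    exact eq_blockOf hexu hB' hiB'
  · rintro rfl
    exact blockOf_mem hexu

lemma sum_inter_card {ι : Type*} [Fintype ι] [DecidableEq ι] {P : Finset (Finset ι)}
    (hP : IsPartOf (Finset.univ : Finset ι) P) (F : Finset ι) :
    ∑ B ∈ P, (B ∩ F).card = F.card := by
  have h1 : ∀ B : Finset ι, (B ∩ F).card = ∑ i ∈ F, if i ∈ B then 1 else 0 := by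
    intro B
    rw [Finset.inter_comm, ← Finset.filter_mem_eq_inter, Finset.card_filter]
  simp_rw [h1]
  rw [Finset.sum_comm]
  rw [Finset.sum_congr rfl (fun i _ => count_blocks hP i), Finset.sum_const, smul_eq_mul, mul_one]

lemma card_firstK {n k : ℕ} (hk : k ≤ n + 1) : (firstK n k).card = k := by
  rw [firstK, Finset.card_filter]
  rw [Fin.sum_univ_eq_sum_range (fun i => if i < k then 1 else 0)]
  rw [← Finset.card_filter]
  have : (Finset.range (n+1)).filter (fun i => i < k) = Finset.range k := by
    ext i
    simp only [Finset.mem_filter, Finset.mem_range]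
    omega
  rw [this, Finset.card_range]

lemma setPartitions_eq_parts (N : ℕ) :
    setPartitions N = parts (Finset.univ : Finset (Fin N)) := by
  ext P
  rw [setPartitions, parts, Finset.mem_filter, Finset.mem_filter]
  simp only [Finset.mem_univ, true_and]
  constructor
  · rintro ⟨hne, hcov⟩
    exact ⟨fun B hB => ⟨Finset.subset_univ B,
      Finset.nonempty_iff_ne_empty.mpr (fun h => hne (h ▸ hB))⟩, fun i _ => hcov i⟩
  · rintro ⟨h1, h2⟩
    exact ⟨fun h0 => Finset.not_nonempty_empty ((h1 ∅ h0).2), fun i => h2 i (Finset.mem_univ i)⟩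

lemma blockTerm_eq (μ : Finset (Fin m) → ℝ) (C : Fin (n+1) → Finset (Fin m)) (k : ℕ)
    (hp : upPhi μ (C (Fin.last n)) ≠ 0) (B : Finset (Fin (n + 1))) :
    ((B.card - 1).factorial : ℝ) * blockTerm μ C k B
      = upPhi μ (C (Fin.last n)) ^ ((B ∩ firstK n k).card + if Fin.last n ∈ B then 1 else 0)
        * gW C (upPhi μ) (condPhi (upPhi μ) (C (Fin.last n)))
            (insert (Fin.last n) (firstK n k)) B := by
  by_cases hlstB : Fin.last n ∈ B
  · rw [blockTerm, if_pos hlstB, if_pos hlstB]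
    have h1 : famMeas μ (B.inf fun i => upSet (C i)) = upPhi μ (B.sup C) := by
      rw [inf_upSet]; rfl
    have hCsub : C (Fin.last n) ⊆ B.sup C := Finset.le_sup hlstB
    have h2 : upPhi μ (B.sup C)
        = upPhi μ (C (Fin.last n)) * condPhi (upPhi μ) (C (Fin.last n)) (B.sup C) := by
      rw [condPhi_mul hp, Finset.union_eq_left.mpr hCsub]
    have h3 : gW C (upPhi μ) (condPhi (upPhi μ) (C (Fin.last n)))
        (insert (Fin.last n) (firstK n k)) B
        = ((B.card - 1).factorial : ℝ)
            * condPhi (upPhi μ) (C (Fin.last n)) (B.sup C) := by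
      rw [gW, if_pos ⟨Fin.last n, Finset.mem_inter.mpr ⟨hlstB, Finset.mem_insert_self _ _⟩⟩]
    rw [h1, h2, h3, pow_succ]
    show ((B.card - 1).factorial : ℝ)
        * (upPhi μ (C (Fin.last n)) ^ (B ∩ firstK n k).card * _) = _
    ring
  · rw [blockTerm, if_neg hlstB, if_neg hlstB]
    simp only [Nat.add_zero]
    by_cases hBF : (B ∩ firstK n k).Nonempty
    · have hfam : (((B ∩ firstK n k).inf fun i => upSet (C i) ∩ upSet (C (Fin.last n)))
          ⊓ ((B \ firstK n k).inf fun i => upSet (C i)))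
          = upSet (B.sup C ∪ C (Fin.last n)) := by
        simp only [upSet_inter]
        rw [inf_upSet, inf_upSet, sup_union_const C (C (Fin.last n)) hBF,
          Finset.inf_eq_inter, upSet_inter]
        have hBsplit : (B ∩ firstK n k) ∪ (B \ firstK n k) = B := by
          ext x
          simp only [Finset.mem_union, Finset.mem_inter, Finset.mem_sdiff]
          tauto
        rw [Finset.union_right_comm]
        congr 2
        rw [← Finset.sup_eq_union, ← Finset.sup_union, hBsplit]
      have h2 : upPhi μ (B.sup C ∪ C (Fin.last n))
          = upPhi μ (C (Fin.last n)) * condPhi (upPhi μ) (C (Fin.last n)) (B.sup C) :=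
        (condPhi_mul hp _).symm
      obtain ⟨i0, hi0⟩ := hBF
      have h3 : gW C (upPhi μ) (condPhi (upPhi μ) (C (Fin.last n)))
          (insert (Fin.last n) (firstK n k)) B
          = ((B.card - 1).factorial : ℝ)
              * condPhi (upPhi μ) (C (Fin.last n)) (B.sup C) := by
        obtain ⟨hi0B, hi0F⟩ := Finset.mem_inter.mp hi0
        rw [gW, if_pos ⟨i0, Finset.mem_inter.mpr ⟨hi0B, Finset.mem_insert_of_mem hi0F⟩⟩]
      have hc1 : 1 ≤ (B ∩ firstK n k).card := Finset.card_pos.mpr ⟨i0, hi0⟩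
      have hfam' : famMeas μ ((((B ∩ firstK n k).inf fun i => upSet (C i) ∩ upSet (C (Fin.last n)))
          ⊓ ((B \ firstK n k).inf fun i => upSet (C i))))
          = upPhi μ (B.sup C ∪ C (Fin.last n)) := by rw [hfam]; rfl
      rw [hfam', h2, h3]
      have hpow : upPhi μ (C (Fin.last n)) ^ ((B ∩ firstK n k).card - 1)
          * upPhi μ (C (Fin.last n)) = upPhi μ (C (Fin.last n)) ^ (B ∩ firstK n k).card := by
        rw [← pow_succ, Nat.sub_add_cancel hc1]
      have hfm : famMeas μ (upSet (C (Fin.last n))) = upPhi μ (C (Fin.last n)) := rfl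
      rw [hfm, ← hpow]
      ring
    · have hBFe : B ∩ firstK n k = ∅ := Finset.not_nonempty_iff_eq_empty.mp hBF
      have hsd : B \ firstK n k = B :=
        Finset.sdiff_eq_self_iff_disjoint.mpr (Finset.disjoint_iff_inter_eq_empty.mpr hBFe)
      rw [hBFe, hsd]
      have hgW : gW C (upPhi μ) (condPhi (upPhi μ) (C (Fin.last n)))
          (insert (Fin.last n) (firstK n k)) B
          = ((B.card - 1).factorial : ℝ) * upPhi μ (B.sup C) := by
        rw [gW, if_neg]
        rintro ⟨i, hi⟩
        obtain ⟨hiB, hiD⟩ := Finset.mem_inter.mp hi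
        rcases Finset.mem_insert.mp hiD with rfl | hiF
        · exact hlstB hiB
        · rw [Finset.eq_empty_iff_forall_notMem] at hBFe
          exact hBFe i (Finset.mem_inter.mpr ⟨hiB, hiF⟩)
      have hfam2 : famMeas μ ((Finset.inf ∅ fun i => upSet (C i) ∩ upSet (C (Fin.last n)))
          ⊓ (B.inf fun i => upSet (C i))) = upPhi μ (B.sup C) := by
        rw [Finset.inf_empty, inf_upSet, top_inf_eq]; rfl
      have hfm : famMeas μ (upSet (C (Fin.last n))) = upPhi μ (C (Fin.last n)) := rfl
      rw [hfm, hgW, hfam2, Finset.card_empty, Nat.zero_sub, pow_zero]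
      ring

lemma Ek_eq_W (μ : Finset (Fin m) → ℝ) (C : Fin (n+1) → Finset (Fin m))
    (hp : upPhi μ (C (Fin.last n)) ≠ 0) (k : ℕ) (hk : k ≤ n + 1) :
    Ek μ C k = upPhi μ (C (Fin.last n)) ^ (k + 1)
      * Wf C (upPhi μ) (condPhi (upPhi μ) (C (Fin.last n)))
          (insert (Fin.last n) (firstK n k)) Finset.univ := by
  rw [Ek, Wf, PF, setPartitions_eq_parts, Finset.mul_sum]
  refine Finset.sum_congr rfl fun P hPmem => ?_
  rw [mem_parts] at hPmem
  have hprod : (∏ B ∈ P, ((B.card - 1).factorial : ℝ)) * ∏ B ∈ P, blockTerm μ C k B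
      = upPhi μ (C (Fin.last n)) ^ (k + 1)
        * ∏ B ∈ P, gW C (upPhi μ) (condPhi (upPhi μ) (C (Fin.last n)))
            (insert (Fin.last n) (firstK n k)) B := by
    rw [← Finset.prod_mul_distrib,
      Finset.prod_congr rfl (fun B _ => blockTerm_eq μ C k hp B),
      Finset.prod_mul_distrib, Finset.prod_pow_eq_pow_sum]
    congr 2
    rw [Finset.sum_add_distrib, sum_inter_card hPmem (firstK n k),
      count_blocks hPmem (Fin.last n), card_firstK hk]
  rw [mul_assoc, hprod]
  ring

lemma Ek_eq_zero (μ : Finset (Fin m) → ℝ) (C : Fin (n+1) → Finset (Fin m))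
    (hg : Good (upPhi μ)) (hp : upPhi μ (C (Fin.last n)) = 0) (k : ℕ) : Ek μ C k = 0 := by
  rw [Ek, setPartitions_eq_parts]
  refine Finset.sum_eq_zero fun P hP => ?_
  rw [mem_parts] at hP
  have hexu := hP.exu (Finset.mem_univ (Fin.last n))
  obtain ⟨hBmem, hlstB⟩ := blockOf_mem hexu
  have h0 : upPhi μ ((blockOf P (Fin.last n)).sup C) = 0 :=
    le_antisymm (hp ▸ hg.anti (Finset.le_sup hlstB)) (hg.nonneg _)
  have hbt : blockTerm μ C k (blockOf P (Fin.last n)) = 0 := by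
    rw [blockTerm, if_pos hlstB]
    have : famMeas μ ((blockOf P (Fin.last n)).inf fun i => upSet (C i)) = 0 := by
      rw [inf_upSet]; exact h0
    rw [this, mul_zero]
  rw [Finset.prod_eq_zero hBmem hbt, mul_zero]

end Assemble
theorem Ek_antitone
    {m n : ℕ} (μ : Finset (Fin m) → ℝ) (hμ : IsProbMeasure μ) (hFKG : FKGCondition μ)
    (C : Fin (n + 1) → Finset (Fin m)) (k : ℕ) (hk : k + 1 ≤ n) :
    Ek μ C (k + 1) ≤ Ek μ C k := by
  have hφ : Good (upPhi μ) := upPhi_good hμ hFKG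
  rcases eq_or_lt_of_le (hφ.nonneg (C (Fin.last n))) with hp0 | hp
  · rw [Ek_eq_zero μ C hφ hp0.symm (k+1), Ek_eq_zero μ C hφ hp0.symm k]
  · have hE1 := Ek_eq_W μ C hp.ne' k (by omega)
    have hE2 := Ek_eq_W μ C hp.ne' (k+1) (by omega)
    set φ := upPhi μ with hφdef
    set ψ := condPhi φ (C (Fin.last n)) with hψdef
    set p := φ (C (Fin.last n)) with hpdef
    have hkn1 : k < n + 1 := by omega
    have hDk1 : insert (⟨k, hkn1⟩ : Fin (n+1)) (insert (Fin.last n) (firstK n k))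
        = insert (Fin.last n) (firstK n (k+1)) := by
      ext i
      simp only [Finset.mem_insert, firstK, Finset.mem_filter, Finset.mem_univ, true_and,
        Fin.ext_iff, Fin.val_last]
      omega
    have hjD : (⟨k, hkn1⟩ : Fin (n+1)) ∉ insert (Fin.last n) (firstK n k) := by
      simp only [Finset.mem_insert, firstK, Finset.mem_filter, Finset.mem_univ, true_and,
        Fin.ext_iff, Fin.val_last]
      omega
    have hQ : ∀ k', Qprop C k' := fun k' => (PQ_all C k').2
    have hmono : Wf C φ ψ (insert (Fin.last n) (firstK n (k+1))) Finset.univ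
        ≤ Wf C φ ψ (insert (Fin.last n) (firstK n k)) Finset.univ := by
      rw [← hDk1]
      refine Wf_mono_step C (hφ.le_cond hp) (Finset.subset_univ _) (Finset.mem_univ _) hjD ?_
      intro T hDT _
      exact hQ T.card φ hφ (Fin.last n) hp _ T (Finset.mem_insert_self _ _) hDT le_rfl
    have hnn : 0 ≤ Wf C φ ψ (insert (Fin.last n) (firstK n (k+1))) Finset.univ :=
      hQ _ φ hφ (Fin.last n) hp _ Finset.univ (Finset.mem_insert_self _ _)
        (Finset.subset_univ _) le_rfl
    rw [hE1, hE2]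
    have hple : p ≤ 1 := hφ.le_one _
    have h1 : p * Wf C φ ψ (insert (Fin.last n) (firstK n (k+1))) Finset.univ
        ≤ Wf C φ ψ (insert (Fin.last n) (firstK n (k+1))) Finset.univ := by
      calc p * _ ≤ 1 * Wf C φ ψ (insert (Fin.last n) (firstK n (k+1))) Finset.univ :=
            mul_le_mul_of_nonneg_right hple hnn
        _ = _ := one_mul _
    calc p ^ (k + 1 + 1) * Wf C φ ψ (insert (Fin.last n) (firstK n (k+1))) Finset.univ
        = p ^ (k+1) * (p * Wf C φ ψ (insert (Fin.last n) (firstK n (k+1))) Finset.univ) := by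
          rw [pow_succ]; ring
      _ ≤ p ^ (k+1) * Wf C φ ψ (insert (Fin.last n) (firstK n k)) Finset.univ :=
          mul_le_mul_of_nonneg_left (h1.trans hmono) (pow_nonneg (hφ.nonneg _) _)

end
end

section
/- Let μ be a probability measure on 2^X satisfying the FKG condition, and let A_1, A_2, A_3 ⊆ 2^X be principal upper sets: A_i = {S ⊆ X : C_i ⊆ S} for some C_i ⊆ X. Then μ(A_3) · [ μ(A_1)·μ(A_2∩A_3) + μ(A_2)·μ(A_1∩A_3) + μ(A_3)·μ(A_1∩A_2) − μ(A_1)·μ(A_2)·μ(A_3) ] ≤ μ(A_1∩A_3)·μ(A_2∩A_3) + μ(A_3)·μ(A_1∩A_2∩A_3). (Equivalently, I^1_{3,μ}(A_1,A_2,A_3) ≥ μ(A_3)·I^0_{3,μ}(A_1,A_2,A_3).) -/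
open Finset
open scoped Classical

noncomputable section

open scoped FinsetFamily

lemma upSet_inter_upSet {m : ℕ} (C D : Finset (Fin m)) :
    upSet C ∩ upSet D = upSet (C ∪ D) := by
  ext S
  simp [upSet, union_subset_iff, and_comm]

lemma upSet_sups_upSet {m : ℕ} (C D : Finset (Fin m)) :
    upSet C ⊻ upSet D = upSet (C ∪ D) := by
  ext S
  simp only [mem_sups, upSet, mem_filter, mem_univ, true_and]
  constructor
  · rintro ⟨a, ha, b, hb, rfl⟩
    exact union_subset (ha.trans subset_union_left) (hb.trans subset_union_right)
  · intro hS
    exact ⟨S, subset_union_left.trans hS, S, subset_union_right.trans hS, union_self S⟩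

lemma famMeas_nonneg {m : ℕ} {μ : Finset (Fin m) → ℝ} (hμ : IsProbMeasure μ)
    (𝒜 : Finset (Finset (Fin m))) : 0 ≤ famMeas μ 𝒜 :=
  Finset.sum_nonneg fun A _ => hμ.1 A

lemma famMeas_le_one {m : ℕ} {μ : Finset (Fin m) → ℝ} (hμ : IsProbMeasure μ)
    (𝒜 : Finset (Finset (Fin m))) : famMeas μ 𝒜 ≤ 1 := by
  rw [← hμ.2]
  exact Finset.sum_le_sum_of_subset_of_nonneg (subset_univ 𝒜) fun A _ _ => hμ.1 A

lemma harris {m : ℕ} {μ : Finset (Fin m) → ℝ} (hμ : IsProbMeasure μ) (hFKG : FKGCondition μ)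
    (C D : Finset (Fin m)) :
    famMeas μ (upSet C) * famMeas μ (upSet D) ≤ famMeas μ (upSet (C ∪ D)) := by
  have h4 := four_functions_theorem μ μ μ μ (fun A => hμ.1 A) (fun A => hμ.1 A)
      (fun A => hμ.1 A) (fun A => hμ.1 A)
      (fun A B => by simpa [inf_eq_inter, sup_eq_union] using hFKG A B)
      (upSet C) (upSet D)
  rw [upSet_sups_upSet] at h4
  calc famMeas μ (upSet C) * famMeas μ (upSet D)
      ≤ (∑ A ∈ upSet C ⊼ upSet D, μ A) * ∑ A ∈ upSet (C ∪ D), μ A := h4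
    _ ≤ 1 * famMeas μ (upSet (C ∪ D)) := by
        apply mul_le_mul_of_nonneg_right _ (famMeas_nonneg hμ _)
        exact famMeas_le_one hμ _
    _ = famMeas μ (upSet (C ∪ D)) := one_mul _

theorem I1_ge_mu_I0
    {m : ℕ} (μ : Finset (Fin m) → ℝ) (hμ : IsProbMeasure μ) (hFKG : FKGCondition μ)
    (C₁ C₂ C₃ : Finset (Fin m)) :
    famMeas μ (upSet C₃) *
        (famMeas μ (upSet C₁) * famMeas μ (upSet C₂ ∩ upSet C₃) +
          famMeas μ (upSet C₂) * famMeas μ (upSet C₁ ∩ upSet C₃) +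
          famMeas μ (upSet C₃) * famMeas μ (upSet C₁ ∩ upSet C₂) -
          famMeas μ (upSet C₁) * famMeas μ (upSet C₂) * famMeas μ (upSet C₃)) ≤
      famMeas μ (upSet C₁ ∩ upSet C₃) * famMeas μ (upSet C₂ ∩ upSet C₃) +
        famMeas μ (upSet C₃) * famMeas μ (upSet C₁ ∩ upSet C₂ ∩ upSet C₃) := by
  rw [upSet_inter_upSet C₁ C₂, upSet_inter_upSet C₁ C₃, upSet_inter_upSet C₂ C₃,
    upSet_inter_upSet (C₁ ∪ C₂) C₃]
  set a := famMeas μ (upSet C₁)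
  set b := famMeas μ (upSet C₂)
  set c := famMeas μ (upSet C₃)
  set x := famMeas μ (upSet (C₁ ∪ C₃))
  set y := famMeas μ (upSet (C₂ ∪ C₃))
  set z := famMeas μ (upSet (C₁ ∪ C₂))
  set w := famMeas μ (upSet (C₁ ∪ C₂ ∪ C₃))
  have hx : a * c ≤ x := harris hμ hFKG C₁ C₃
  have hy : b * c ≤ y := harris hμ hFKG C₂ C₃
  have hw : z * c ≤ w := harris hμ hFKG (C₁ ∪ C₂) C₃
  have hc : 0 ≤ c := famMeas_nonneg hμ _
  have hz : 0 ≤ z := famMeas_nonneg hμ _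
  nlinarith [mul_nonneg (sub_nonneg.2 hx) (sub_nonneg.2 hy), mul_le_mul_of_nonneg_left hw hc,
    mul_nonneg hc hz]

end
end
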